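/- arXiv:1709.07172 — 3 statements merged into one kernel-verified Lean document; each statement's English description precedes it below -/
import Mathlib

section
/- Regret bound in the noise-free setting (Theorem 1): let P_1,...,P_n be tensors in [0,1]^{d×d×d} with entries summing to 1, let x_t be one-hot tensors, define ℓ_t(M) = ‖x_t − M‖_F², and let A_t = (1/t)·Σ_{s=1}^t P_s with A_0 arbitrary in the simplex. Then Σ_{t=2}^n (ℓ_t(A_{t−1}) − ℓ_t(A_t)) ≤ 4·sqrt(d³)·Σ_{t=2}^n (1/t) ≤ 4·sqrt(d³)·log n. -/
/-!
Since `A (t + 1) = A t + (P (t + 1) - A t) / (t + 1)` and both `P (t + 1)` and `A t` are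
probability tensors, every entry of `A t - A (t + 1)` is at most `1 / (t + 1)` in absolute value.
Expanding the squares, `ℓ_t(M) - ℓ_t(M') = ∑ (M - M') (M + M' - 2 x_t)`, which for an entrywise
bound `c` on `M - M'` is at most `c ∑ (M + M' + 2 x_t) ≤ 4 c`. Summing over `t` bounds the regret
by `4 ∑ 1 / t ≤ 4 √(d³) ∑ 1 / t`, and `∑_{t=2}^n 1 / t = H_n - 1 ≤ log n`.
-/

open Finset

noncomputable def runningAvg (P : ℕ → ℝ) (t : ℕ) : ℝ := (1 / (t : ℝ)) * ∑ s ∈ Icc 1 t, P s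

section RunningAvg

variable {P : ℕ → ℝ}

lemma runningAvg_mem_Icc (hP : ∀ s, P s ∈ Set.Icc (0 : ℝ) 1) (t : ℕ) :
    runningAvg P t ∈ Set.Icc (0 : ℝ) 1 := by
  rcases Nat.eq_zero_or_pos t with rfl | ht
  · simp [runningAvg]
  have hsum_nonneg : 0 ≤ ∑ s ∈ Icc 1 t, P s := sum_nonneg fun s _ => (hP s).1
  have hsum_le : ∑ s ∈ Icc 1 t, P s ≤ t := by
    simpa using sum_le_sum fun s (_ : s ∈ Icc 1 t) => (hP s).2
  have ht' : (0 : ℝ) < t := by exact_mod_cast ht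
  rw [runningAvg, one_div_mul_eq_div]
  exact ⟨by positivity, (div_le_one ht').mpr hsum_le⟩

lemma runningAvg_succ (P : ℕ → ℝ) (t : ℕ) :
    runningAvg P (t + 1) = runningAvg P t + (P (t + 1) - runningAvg P t) / (t + 1) := by
  rw [runningAvg, runningAvg, sum_Icc_succ_top (by omega)]
  rcases Nat.eq_zero_or_pos t with rfl | ht
  · simp
  · have : (t : ℝ) ≠ 0 := by positivity
    push_cast
    field_simp
    ring

lemma abs_runningAvg_sub_runningAvg_succ_le (hP : ∀ s, P s ∈ Set.Icc (0 : ℝ) 1) (t : ℕ) :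
    |runningAvg P t - runningAvg P (t + 1)| ≤ 1 / ((t + 1 : ℕ) : ℝ) := by
  have hdiff := abs_sub_le_of_nonneg_of_le (hP (t + 1)).1 (hP (t + 1)).2
    (runningAvg_mem_Icc hP t).1 (runningAvg_mem_Icc hP t).2
  rw [runningAvg_succ, sub_add_cancel_left, abs_neg, abs_div,
    abs_of_pos (by positivity : (0 : ℝ) < t + 1)]
  push_cast
  exact div_le_div_of_nonneg_right hdiff (by positivity)

lemma sum_runningAvg {ι : Type*} [Fintype ι] {P : ℕ → ι → ℝ} (hP : ∀ s, ∑ i, P s i = 1)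
    {t : ℕ} (ht : 1 ≤ t) : ∑ i, runningAvg (fun s => P s i) t = 1 := by
  have ht' : (t : ℝ) ≠ 0 := by positivity
  simp only [runningAvg, ← mul_sum]
  rw [sum_comm]
  simp [hP, ht']

end RunningAvg

lemma sum_sq_sub_sub_sum_sq_sub_le {ι : Type*} [Fintype ι] {x M M' : ι → ℝ} {c : ℝ}
    (hx : ∀ i, 0 ≤ x i) (hxs : ∑ i, x i ≤ 1) (hM : ∀ i, 0 ≤ M i) (hM' : ∀ i, 0 ≤ M' i)
    (hMs : ∑ i, M i = 1) (hM's : ∑ i, M' i = 1) (hc : ∀ i, |M i - M' i| ≤ c) :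
    ∑ i, (x i - M i) ^ 2 - ∑ i, (x i - M' i) ^ 2 ≤ 4 * c := by
  have hc0 : 0 ≤ c := by
    obtain ⟨i, -, -⟩ := exists_ne_zero_of_sum_ne_zero (hMs ▸ one_ne_zero)
    exact (abs_nonneg _).trans (hc i)
  have hpoint : ∀ i, (x i - M i) ^ 2 - (x i - M' i) ^ 2 ≤ c * (2 * x i + M i + M' i) := by
    intro i
    obtain ⟨hlo, hhi⟩ := abs_le.mp (hc i)
    nlinarith [hx i, hM i, hM' i]
  calc ∑ i, (x i - M i) ^ 2 - ∑ i, (x i - M' i) ^ 2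
      = ∑ i, ((x i - M i) ^ 2 - (x i - M' i) ^ 2) := (sum_sub_distrib _ _).symm
    _ ≤ ∑ i, c * (2 * x i + M i + M' i) := sum_le_sum fun i _ => hpoint i
    _ = c * (2 * ∑ i, x i + ∑ i, M i + ∑ i, M' i) := by
        rw [← mul_sum, sum_add_distrib, sum_add_distrib, mul_sum]
    _ ≤ 4 * c := by rw [hMs, hM's]; nlinarith

lemma sum_sq_sub_runningAvg_sub_le {ι : Type*} [Fintype ι] {P : ℕ → ι → ℝ}
    (hP : ∀ s i, P s i ∈ Set.Icc (0 : ℝ) 1) (hPsum : ∀ s, ∑ i, P s i = 1)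
    {x : ι → ℝ} (hx : ∀ i, 0 ≤ x i) (hxs : ∑ i, x i ≤ 1) {t : ℕ} (ht : 1 ≤ t) :
    ∑ i, (x i - runningAvg (fun s => P s i) t) ^ 2
        - ∑ i, (x i - runningAvg (fun s => P s i) (t + 1)) ^ 2 ≤ 4 * (1 / ((t + 1 : ℕ) : ℝ)) :=
  sum_sq_sub_sub_sum_sq_sub_le hx hxs
    (fun i => (runningAvg_mem_Icc (hP · i) t).1) (fun i => (runningAvg_mem_Icc (hP · i) _).1)
    (sum_runningAvg hPsum ht) (sum_runningAvg hPsum (by omega))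
    (fun i => abs_runningAvg_sub_runningAvg_succ_le (hP · i) t)

theorem sum_regret_runningAvg_le {ι : Type*} [Fintype ι] (n : ℕ) (P : ℕ → ι → ℝ)
    (hP : ∀ s i, P s i ∈ Set.Icc (0 : ℝ) 1) (hPsum : ∀ s, ∑ i, P s i = 1)
    (x : ℕ → ι → ℝ) (hx : ∀ t i, 0 ≤ x t i) (hxs : ∀ t, ∑ i, x t i ≤ 1)
    (A : ℕ → ι → ℝ) (hA : ∀ t, 1 ≤ t → ∀ i, A t i = runningAvg (fun s => P s i) t) :
    ∑ t ∈ Icc 2 n, (∑ i, (x t i - A (t - 1) i) ^ 2 - ∑ i, (x t i - A t i) ^ 2)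
      ≤ 4 * ∑ t ∈ Icc 2 n, (1 / (t : ℝ)) := by
  rw [mul_sum]
  refine sum_le_sum fun t ht => ?_
  obtain ⟨m, rfl⟩ : ∃ m, t = m + 1 := ⟨t - 1, by grind⟩
  have hm : 1 ≤ m := by grind
  simp only [Nat.add_sub_cancel, hA m hm, hA (m + 1) (by omega)]
  exact sum_sq_sub_runningAvg_sub_le hP hPsum (hx _) (hxs _) hm

theorem sum_Icc_two_one_div_le_log {n : ℕ} (hn : 1 ≤ n) :
    ∑ t ∈ Icc 2 n, (1 / (t : ℝ)) ≤ Real.log n := by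
  have h := harmonic_le_one_add_log n
  rw [harmonic_eq_sum_Icc, ← add_sum_Ioc_eq_sum_Icc hn, ← Icc_add_one_left_eq_Ioc] at h
  push_cast at h
  simpa [one_div] using h

theorem noise_free_regret_general
    {d : ℕ} (n : ℕ) (hn : 1 ≤ n)
    (P : ℕ → Fin d → Fin d → Fin d → ℝ)
    (hP : ∀ s i j k, P s i j k ∈ Set.Icc (0 : ℝ) 1)
    (hPsum : ∀ s, ∑ i, ∑ j, ∑ k, P s i j k = 1)
    (x : ℕ → Fin d → Fin d → Fin d → ℝ)
    (hx : ∀ t, ∃ i₀ j₀ k₀ : Fin d, ∀ i j k,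
      x t i j k = if i = i₀ ∧ j = j₀ ∧ k = k₀ then 1 else 0)
    (A : ℕ → Fin d → Fin d → Fin d → ℝ)
    (hA : ∀ t, 1 ≤ t → ∀ i j k,
      A t i j k = (1 / (t : ℝ)) * ∑ s ∈ Finset.Icc 1 t, P s i j k) :
    (∑ t ∈ Finset.Icc 2 n,
        ((∑ i, ∑ j, ∑ k, (x t i j k - A (t - 1) i j k) ^ 2)
          - (∑ i, ∑ j, ∑ k, (x t i j k - A t i j k) ^ 2)))
        ≤ 4 * Real.sqrt ((d : ℝ) ^ 3) * ∑ t ∈ Finset.Icc 2 n, (1 / (t : ℝ)) ∧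
      4 * Real.sqrt ((d : ℝ) ^ 3) * ∑ t ∈ Finset.Icc 2 n, (1 / (t : ℝ))
        ≤ 4 * Real.sqrt ((d : ℝ) ^ 3) * Real.log n := by
  have hd : d ≠ 0 := by
    rintro rfl
    simpa using hPsum 0
  have hsqrt : 1 ≤ √((d : ℝ) ^ 3) :=
    Real.one_le_sqrt.mpr (one_le_pow₀ (Nat.one_le_cast.mpr (Nat.one_le_iff_ne_zero.mpr hd)))
  have hharm : 0 ≤ ∑ t ∈ Icc 2 n, (1 / (t : ℝ)) := sum_nonneg fun _ _ => by positivity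
  have hx0 : ∀ t i j k, 0 ≤ x t i j k := fun t i j k => by
    obtain ⟨i₀, j₀, k₀, hxt⟩ := hx t
    rw [hxt]; split_ifs <;> norm_num
  have hxs : ∀ t, ∑ i, ∑ j, ∑ k, x t i j k = 1 := fun t => by
    obtain ⟨i₀, j₀, k₀, hxt⟩ := hx t
    simp [hxt, ite_and]
  have hregret := sum_regret_runningAvg_le n
    (fun s (p : Fin d × Fin d × Fin d) => P s p.1 p.2.1 p.2.2)
    (fun s p => hP s _ _ _) (fun s => by simpa only [Fintype.sum_prod_type] using hPsum s)
    (fun t p => x t p.1 p.2.1 p.2.2) (fun t p => hx0 t _ _ _)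
    (fun t => by simp only [Fintype.sum_prod_type, hxs, le_refl])
    (fun t p => A t p.1 p.2.1 p.2.2) (fun t ht p => hA t ht _ _ _)
  simp only [Fintype.sum_prod_type] at hregret
  refine ⟨hregret.trans ?_, ?_⟩
  · nlinarith
  · gcongr
    exact sum_Icc_two_one_div_le_log hn

/-- regret bound in the noise-free setting (Theorem 1). -/
theorem noise_free_regret
    {d : ℕ} (n : ℕ) (hn : 1 ≤ n)
    (P : ℕ → Fin d → Fin d → Fin d → ℝ)
    (hP : ∀ s i j k, P s i j k ∈ Set.Icc (0 : ℝ) 1)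
    (hPsum : ∀ s, ∑ i, ∑ j, ∑ k, P s i j k = 1)
    (x : ℕ → Fin d → Fin d → Fin d → ℝ)
    (hx : ∀ t, ∃ i₀ j₀ k₀ : Fin d, ∀ i j k,
      x t i j k = if i = i₀ ∧ j = j₀ ∧ k = k₀ then 1 else 0)
    (A : ℕ → Fin d → Fin d → Fin d → ℝ)
    (hA0 : ∀ i j k, A 0 i j k ∈ Set.Icc (0 : ℝ) 1)
    (hA0sum : ∑ i, ∑ j, ∑ k, A 0 i j k = 1)
    (hA : ∀ t, 1 ≤ t → ∀ i j k,
      A t i j k = (1 / (t : ℝ)) * ∑ s ∈ Finset.Icc 1 t, P s i j k) :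
    (∑ t ∈ Finset.Icc 2 n,
        ((∑ i, ∑ j, ∑ k, (x t i j k - A (t - 1) i j k) ^ 2)
          - (∑ i, ∑ j, ∑ k, (x t i j k - A t i j k) ^ 2)))
        ≤ 4 * Real.sqrt ((d : ℝ) ^ 3) * ∑ t ∈ Finset.Icc 2 n, (1 / (t : ℝ)) ∧
      4 * Real.sqrt ((d : ℝ) ^ 3) * ∑ t ∈ Finset.Icc 2 n, (1 / (t : ℝ))
        ≤ 4 * Real.sqrt ((d : ℝ) ^ 3) * Real.log n :=
  noise_free_regret_general n hn P hP hPsum x hx A hA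
end

section
/- Regret bound with reservoir sampling in the noise-free setting (Theorem 2, full): assume P(∃ t,i,j,k : |M̃_{t−1}(i,j,k) − M̄_{t−1}(i,j,k)| ≥ ε) = δ, where M̃_{t−1} and M̄_{t−1} are probability tensors in [0,1]^{d×d×d}, and ℓ_t(M) = ‖x_t − M‖_F² for one-hot x_t with Σ_{t=1}^n E[ℓ_t(M̄_{t−1}) − ℓ_t(M̄_n)] ≤ 4·sqrt(d³)·log n. Then R(n) = Σ_{t=1}^n E[ℓ_t(M̃_{t−1}) − ℓ_t(M̄_n)] ≤ 4·sqrt(d³)·ε·n + 4·sqrt(d³)·δ·n + 4·sqrt(d³)·log n. -/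
/-!
Where the reservoir estimate `M̃_{t-1}` is entrywise `ε`-close to `M̄_{t-1}`, the loss gap
`ℓ_t(M̃_{t-1}) - ℓ_t(M̄_{t-1})` is at most `4ε`: termwise
`(x - A)² - (x - B)² = (B - A)(2x - A - B)`, and `x`, `A`, `B` are probability vectors. Elsewhere the gap is at most `2`, the largest squared
distance between probability vectors. So in expectation each round costs at most `4ε + 2δ` more
than the running average does, and `4 ≤ 4√(d³)` because `d ≥ 1`.
-/

open MeasureTheory ProbabilityTheory Finset

section SquaredLoss

variable {ι : Type*} [Fintype ι]

def sqLoss (x A : ι → ℝ) : ℝ := ∑ i, (x i - A i) ^ 2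

lemma sqLoss_nonneg (x A : ι → ℝ) : 0 ≤ sqLoss x A := by
  unfold sqLoss; positivity

lemma sqLoss_le_two {x A : ι → ℝ} (hx : x ∈ stdSimplex ℝ ι) (hA : A ∈ stdSimplex ℝ ι) :
    sqLoss x A ≤ 2 := by
  have hterm : ∀ i, (x i - A i) ^ 2 ≤ x i + A i := fun i => by
    obtain ⟨hx0, hx1⟩ := mem_Icc_of_mem_stdSimplex hx i
    obtain ⟨hA0, hA1⟩ := mem_Icc_of_mem_stdSimplex hA i
    nlinarith
  calc sqLoss x A ≤ ∑ i, (x i + A i) := sum_le_sum fun i _ => hterm i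
    _ = 2 := by rw [sum_add_distrib, hx.2, hA.2]; norm_num

lemma sqLoss_sub_sqLoss_le {x A B : ι → ℝ} {ε : ℝ} (hx : x ∈ stdSimplex ℝ ι)
    (hA : A ∈ stdSimplex ℝ ι) (hB : B ∈ stdSimplex ℝ ι) (hAB : ∀ i, |A i - B i| ≤ ε) :
    sqLoss x A - sqLoss x B ≤ 4 * ε := by
  have hterm : ∀ i, (x i - A i) ^ 2 - (x i - B i) ^ 2 ≤ ε * (2 * x i + A i + B i) := fun i => by
    have hx0 := hx.1 i; have hA0 := hA.1 i; have hB0 := hB.1 i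
    have h := hAB i
    calc (x i - A i) ^ 2 - (x i - B i) ^ 2 = (B i - A i) * (2 * x i - A i - B i) := by ring
      _ ≤ |B i - A i| * |2 * x i - A i - B i| := (le_abs_self _).trans (abs_mul _ _).le
      _ ≤ ε * (2 * x i + A i + B i) := by
        rw [abs_sub_comm] at h
        gcongr
        · exact (abs_nonneg _).trans h
        · exact abs_le.2 ⟨by linarith, by linarith⟩
  calc sqLoss x A - sqLoss x B ≤ ∑ i, ε * (2 * x i + A i + B i) := by
        rw [sqLoss, sqLoss, ← sum_sub_distrib]; exact sum_le_sum fun i _ => hterm i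
    _ = 4 * ε := by
        rw [← mul_sum, sum_add_distrib, sum_add_distrib, ← mul_sum, hx.2, hA.2, hB.2]; ring

end SquaredLoss

section ExpectedLoss

variable {ι Ω : Type*} [Fintype ι] [MeasurableSpace Ω] {μ : Measure Ω}

lemma integrable_sqLoss [IsFiniteMeasure μ] {x A : Ω → ι → ℝ}
    (hxm : ∀ i, Measurable fun ω => x ω i) (hAm : ∀ i, Measurable fun ω => A ω i)
    (hx : ∀ ω, x ω ∈ stdSimplex ℝ ι) (hA : ∀ ω, A ω ∈ stdSimplex ℝ ι) :
    Integrable (fun ω => sqLoss (x ω) (A ω)) μ := by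
  refine .of_bound ?_ 2 (.of_forall fun ω => ?_)
  · exact (Finset.measurable_sum _ fun i _ =>
      ((hxm i).sub (hAm i)).pow_const 2).aestronglyMeasurable
  · rw [Real.norm_of_nonneg (sqLoss_nonneg _ _)]
    exact sqLoss_le_two (hx ω) (hA ω)

lemma integral_sqLoss_sub_le [IsProbabilityMeasure μ] {x A B C : Ω → ι → ℝ} {ε : ℝ}
    (hε : 0 ≤ ε) (s : Set Ω)
    (hxm : ∀ i, Measurable fun ω => x ω i) (hAm : ∀ i, Measurable fun ω => A ω i)
    (hBm : ∀ i, Measurable fun ω => B ω i) (hCm : ∀ i, Measurable fun ω => C ω i)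
    (hx : ∀ ω, x ω ∈ stdSimplex ℝ ι) (hA : ∀ ω, A ω ∈ stdSimplex ℝ ι)
    (hB : ∀ ω, B ω ∈ stdSimplex ℝ ι) (hC : ∀ ω, C ω ∈ stdSimplex ℝ ι)
    (hAB : ∀ ω ∉ s, ∀ i, |A ω i - B ω i| ≤ ε) :
    ∫ ω, (sqLoss (x ω) (A ω) - sqLoss (x ω) (C ω)) ∂μ
      ≤ 4 * ε + 2 * μ.real s + ∫ ω, (sqLoss (x ω) (B ω) - sqLoss (x ω) (C ω)) ∂μ := by
  have hIA := integrable_sqLoss (μ := μ) hxm hAm hx hA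
  have hIB := integrable_sqLoss (μ := μ) hxm hBm hx hB
  have hIC := integrable_sqLoss (μ := μ) hxm hCm hx hC
  -- `s` need not be measurable; its measurable hull has the same measure
  set t := toMeasurable μ s
  have hpoint : ∀ ω,
      sqLoss (x ω) (A ω) - sqLoss (x ω) (B ω) ≤ 4 * ε + t.indicator (fun _ => (2 : ℝ)) ω := by
    intro ω
    by_cases hω : ω ∈ t
    · rw [Set.indicator_of_mem hω]
      linarith [sqLoss_le_two (hx ω) (hA ω), sqLoss_nonneg (x ω) (B ω)]
    · rw [Set.indicator_of_notMem hω, add_zero]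
      exact sqLoss_sub_sqLoss_le (hx ω) (hA ω) (hB ω)
        (hAB ω fun hs => hω (subset_toMeasurable μ s hs))
  have hdiff : ∫ ω, (sqLoss (x ω) (A ω) - sqLoss (x ω) (B ω)) ∂μ ≤ 4 * ε + 2 * μ.real s := by
    have ht := measurableSet_toMeasurable μ s
    have hI : Integrable (t.indicator fun _ => (2 : ℝ)) μ := (integrable_const 2).indicator ht
    calc ∫ ω, (sqLoss (x ω) (A ω) - sqLoss (x ω) (B ω)) ∂μ
        ≤ ∫ ω, (4 * ε + t.indicator (fun _ => (2 : ℝ)) ω) ∂μ :=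
          integral_mono (hIA.sub hIB) ((integrable_const _).add hI) hpoint
      _ = 4 * ε + 2 * μ.real s := by
          rw [integral_add (integrable_const _) hI, integral_const, integral_indicator_const _ ht,
            probReal_univ, Measure.real, Measure.real, measure_toMeasurable]
          simp only [smul_eq_mul]; ring
  rw [integral_sub hIA hIC, integral_sub hIB hIC]
  rw [integral_sub hIA hIB] at hdiff
  linarith

end ExpectedLoss

section Tensor

variable {α β γ : Type*}

def uncurry3 {R : Type*} (M : α → β → γ → R) (p : α × β × γ) : R := M p.1 p.2.1 p.2.2

variable [Fintype α] [Fintype β] [Fintype γ]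

lemma sqLoss_uncurry3 (x M : α → β → γ → ℝ) :
    sqLoss (uncurry3 x) (uncurry3 M) = ∑ i, ∑ j, ∑ k, (x i j k - M i j k) ^ 2 := by
  simp only [sqLoss, uncurry3, Fintype.sum_prod_type]

lemma uncurry3_mem_stdSimplex {M : α → β → γ → ℝ} (h0 : ∀ i j k, 0 ≤ M i j k)
    (h1 : ∑ i, ∑ j, ∑ k, M i j k = 1) : uncurry3 M ∈ stdSimplex ℝ (α × β × γ) :=
  ⟨fun p => h0 p.1 p.2.1 p.2.2, by simpa only [uncurry3, Fintype.sum_prod_type] using h1⟩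

lemma uncurry3_mem_stdSimplex_of_oneHot [DecidableEq α] [DecidableEq β] [DecidableEq γ]
    {x : α → β → γ → ℝ}
    (hx : ∃ i₀ j₀ k₀, ∀ i j k, x i j k = if i = i₀ ∧ j = j₀ ∧ k = k₀ then 1 else 0) :
    uncurry3 x ∈ stdSimplex ℝ (α × β × γ) := by
  obtain ⟨i₀, j₀, k₀, hx⟩ := hx
  have : uncurry3 x = Pi.single (i₀, j₀, k₀) 1 := by
    ext ⟨i, j, k⟩
    simp [uncurry3, hx, Pi.single_apply, Prod.ext_iff]
  exact this ▸ single_mem_stdSimplex ℝ _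

end Tensor

/-- regret bound with reservoir sampling in the noise-free setting
(Theorem 2, full). -/
theorem reservoir_regret_bound
    {d : ℕ} (n : ℕ) {Ω : Type*} [MeasureSpace Ω] [IsProbabilityMeasure (ℙ : Measure Ω)]
    (ε δ : ℝ) (hε : ε ∈ Set.Icc (0 : ℝ) 1) (hδ : δ ∈ Set.Icc (0 : ℝ) 1)
    (x : ℕ → Ω → Fin d → Fin d → Fin d → ℝ)
    (hmeas : ∀ t i j k, Measurable (fun ω => x t ω i j k))
    (hx : ∀ t ω, ∃ i₀ j₀ k₀ : Fin d, ∀ i j k,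
      x t ω i j k = if i = i₀ ∧ j = j₀ ∧ k = k₀ then 1 else 0)
    (Mt : ℕ → Ω → Fin d → Fin d → Fin d → ℝ)   -- reservoir estimate M̃
    (Mb : ℕ → Fin d → Fin d → Fin d → ℝ)       -- running average M̄
    (hMtmeas : ∀ t i j k, Measurable (fun ω => Mt t ω i j k))
    (hMt : ∀ t ω i j k, Mt t ω i j k ∈ Set.Icc (0 : ℝ) 1)
    (hMb : ∀ t i j k, Mb t i j k ∈ Set.Icc (0 : ℝ) 1)
    (hMtsum : ∀ t ω, ∑ i, ∑ j, ∑ k, Mt t ω i j k = 1)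
    (hMbsum : ∀ t, ∑ i, ∑ j, ∑ k, Mb t i j k = 1)
    (hbad : (ℙ {ω : Ω | ∃ t ∈ Finset.Icc 1 n, ∃ i j k : Fin d,
      ε ≤ |Mt (t - 1) ω i j k - Mb (t - 1) i j k|}).toReal = δ)
    (hMbregret : ∑ t ∈ Finset.Icc 1 n,
        ∫ ω, ((∑ i, ∑ j, ∑ k, (x t ω i j k - Mb (t - 1) i j k) ^ 2)
          - (∑ i, ∑ j, ∑ k, (x t ω i j k - Mb n i j k) ^ 2))
        ≤ 4 * Real.sqrt ((d : ℝ) ^ 3) * Real.log n) :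
    ∑ t ∈ Finset.Icc 1 n,
        ∫ ω, ((∑ i, ∑ j, ∑ k, (x t ω i j k - Mt (t - 1) ω i j k) ^ 2)
          - (∑ i, ∑ j, ∑ k, (x t ω i j k - Mb n i j k) ^ 2))
      ≤ 4 * Real.sqrt ((d : ℝ) ^ 3) * ε * n
        + 4 * Real.sqrt ((d : ℝ) ^ 3) * δ * n
        + 4 * Real.sqrt ((d : ℝ) ^ 3) * Real.log n := by
  set bad := {ω : Ω | ∃ t ∈ Finset.Icc 1 n, ∃ i j k : Fin d,
    ε ≤ |Mt (t - 1) ω i j k - Mb (t - 1) i j k|}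
  have hround : ∀ t ∈ Finset.Icc 1 n,
      ∫ ω, ((∑ i, ∑ j, ∑ k, (x t ω i j k - Mt (t - 1) ω i j k) ^ 2)
          - (∑ i, ∑ j, ∑ k, (x t ω i j k - Mb n i j k) ^ 2))
        ≤ 4 * ε + 2 * δ + ∫ ω, ((∑ i, ∑ j, ∑ k, (x t ω i j k - Mb (t - 1) i j k) ^ 2)
          - (∑ i, ∑ j, ∑ k, (x t ω i j k - Mb n i j k) ^ 2)) := fun t ht => by
    have h := integral_sqLoss_sub_le (μ := ℙ) hε.1 bad
      (x := fun ω => uncurry3 (x t ω)) (A := fun ω => uncurry3 (Mt (t - 1) ω))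
      (B := fun _ => uncurry3 (Mb (t - 1))) (C := fun _ => uncurry3 (Mb n))
      (fun p => hmeas t p.1 p.2.1 p.2.2) (fun p => hMtmeas (t - 1) p.1 p.2.1 p.2.2)
      (fun _ => measurable_const) (fun _ => measurable_const)
      (fun ω => uncurry3_mem_stdSimplex_of_oneHot (hx t ω))
      (fun ω => uncurry3_mem_stdSimplex (fun i j k => (hMt (t - 1) ω i j k).1) (hMtsum (t - 1) ω))
      (fun _ => uncurry3_mem_stdSimplex (fun i j k => (hMb (t - 1) i j k).1) (hMbsum (t - 1)))
      (fun _ => uncurry3_mem_stdSimplex (fun i j k => (hMb n i j k).1) (hMbsum n))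
      (fun ω hω p => (not_le.1 fun h => hω ⟨t, ht, p.1, p.2.1, p.2.2, h⟩).le)
    simpa only [sqLoss_uncurry3, measureReal_def, hbad] using h
  have hd : (1 : ℝ) ≤ d := by
    have : d ≠ 0 := by rintro rfl; simpa using hMbsum 0
    exact_mod_cast Nat.one_le_iff_ne_zero.2 this
  have hC : 4 ≤ 4 * Real.sqrt ((d : ℝ) ^ 3) := by
    have := Real.one_le_sqrt.2 (one_le_pow₀ (n := 3) hd)
    linarith
  have hsum := sum_le_sum hround
  rw [sum_add_distrib, sum_const, Nat.card_Icc, Nat.add_sub_cancel, nsmul_eq_mul] at hsum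
  have hn : (0 : ℝ) ≤ n := n.cast_nonneg
  nlinarith [mul_nonneg hn hε.1, mul_nonneg hn hδ.1]
end

section
/- Recovery of mixture weights from whitened eigenvalues: suppose M_2 = Σ_{c=1}^K ω_c·u_c u_c^T with ω_c > 0 and u_1,...,u_K ∈ ℝ^d linearly independent, and W ∈ ℝ^{d×K} is a whitening matrix satisfying W^T M_2 W = I_K. Then the vectors v_c = sqrt(ω_c)·W^T u_c, c ∈ [K], form an orthonormal basis of ℝ^K, and the whitened third moment T = Σ_c ω_c (W^T u_c)^{⊗3} equals Σ_c (1/sqrt(ω_c))·v_c^{⊗3}; in particular the eigenvalues λ_c = 1/sqrt(ω_c) of T recover the weights via ω_c = 1/λ_c². -/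
/-!
Conjugating by `W` turns `M₂` into `∑ c, v_c v_cᵀ`, so the square matrix `V` with rows `v_c`
satisfies `Vᵀ V = 1`. A one-sided inverse of a square matrix is two-sided, hence `V Vᵀ = 1`: the
`v_c` are orthonormal, and being `K` of them in `ℝ^K` they span. The tensor identity is the
scalar identity `ω = ω^{-1/2} (√ω)³` applied term by term.
-/

open Finset Matrix

namespace Matrix

variable {ι m n R : Type*} [Fintype ι]

theorem transpose_mul_sum_smul_vecMulVec_self_mul [Fintype m] [CommSemiring R] (W : Matrix m n R)
    (w : ι → R) (u : ι → m → R) :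
    Wᵀ * (∑ c, w c • vecMulVec (u c) (u c)) * W =
      ∑ c, w c • vecMulVec (Wᵀ *ᵥ u c) (Wᵀ *ᵥ u c) := by
  simp only [Matrix.mul_sum, Matrix.sum_mul, Matrix.mul_smul, Matrix.smul_mul, mul_vecMulVec,
    vecMulVec_mul, mulVec_transpose]

theorem dotProduct_eq_ite_of_sum_vecMulVec_self_eq_one [CommRing R] [DecidableEq ι]
    (v : ι → ι → R) (h : ∑ c, vecMulVec (v c) (v c) = 1) (c c' : ι) :
    v c ⬝ᵥ v c' = if c = c' then 1 else 0 := by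
  have hVtV : (of v)ᵀ * of v = 1 := by
    rw [← h]
    ext a b
    simp [mul_apply, vecMulVec_apply, sum_apply]
  have hVVt : of v * (of v)ᵀ = 1 := mul_eq_one_comm.mp hVtV
  simpa [mul_apply, one_apply, dotProduct] using congrFun₂ hVVt c c'

end Matrix

theorem EuclideanSpace.orthonormal_of_sum_vecMulVec_self_eq_one {ι : Type*} [Fintype ι]
    [DecidableEq ι] (v : ι → EuclideanSpace ℝ ι) (h : ∑ c, vecMulVec (v c) (v c) = 1) :
    Orthonormal ℝ v := by
  rw [orthonormal_iff_ite]
  intro c c'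
  rw [EuclideanSpace.inner_eq_star_dotProduct, star_trivial, dotProduct_comm]
  exact dotProduct_eq_ite_of_sum_vecMulVec_self_eq_one (fun c => v c) h c c'

theorem Real.one_div_sqrt_mul_sqrt_pow_three {w : ℝ} (hw : 0 ≤ w) : 1 / √w * √w ^ 3 = w := by
  rcases hw.eq_or_lt with rfl | hw
  · simp
  have hs : √w ≠ 0 := (Real.sqrt_pos.mpr hw).ne'
  field_simp
  exact Real.sq_sqrt hw.le

theorem whitening_recovery_general
    {K d : ℕ}
    (w : Fin K → ℝ) (hw : ∀ c, 0 < w c)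
    (u : Fin K → Fin d → ℝ)
    (W : Matrix (Fin d) (Fin K) ℝ)
    (hW : Wᵀ * (∑ c, w c • Matrix.vecMulVec (u c) (u c)) * W = 1)
    (v : Fin K → EuclideanSpace ℝ (Fin K))
    (hv : ∀ c a, v c a = Real.sqrt (w c) * (Wᵀ.mulVec (u c)) a) :
    Orthonormal ℝ v ∧
      Submodule.span ℝ (Set.range v) = ⊤ ∧
      (∀ a b e : Fin K,
        (∑ c, w c * (Wᵀ.mulVec (u c) a * (Wᵀ.mulVec (u c) b * Wᵀ.mulVec (u c) e)))
          = ∑ c, (1 / Real.sqrt (w c)) * (v c a * (v c b * v c e))) ∧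
      (∀ c, w c = 1 / (1 / Real.sqrt (w c)) ^ 2) := by
  have hv_smul : ∀ c, ⇑(v c) = √(w c) • (Wᵀ *ᵥ u c) := fun c => funext (hv c)
  have hgram : ∑ c, vecMulVec (v c) (v c) = 1 := by
    rw [← hW, transpose_mul_sum_smul_vecMulVec_self_mul]
    refine sum_congr rfl fun c _ => ?_
    rw [hv_smul, smul_vecMulVec, vecMulVec_smul, smul_smul, Real.mul_self_sqrt (hw c).le]
  have horth : Orthonormal ℝ v := EuclideanSpace.orthonormal_of_sum_vecMulVec_self_eq_one v hgram
  refine ⟨horth, horth.linearIndependent.span_eq_top_of_card_eq_finrank' (by simp),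
    fun a b e => sum_congr rfl fun c _ => ?_, fun c => ?_⟩
  · rw [hv, hv, hv]
    nth_rw 1 [← Real.one_div_sqrt_mul_sqrt_pow_three (hw c).le]
    ring
  · rw [_root_.one_div_pow, one_div_one_div, Real.sq_sqrt (hw c).le]

/-- recovery of mixture weights from whitened eigenvalues: if
Wᵀ M₂ W = I_K, the whitened rescaled vectors v_c = √ω_c · Wᵀ u_c form an
orthonormal basis of ℝ^K, the whitened third moment equals
Σ_c (1/√ω_c)·v_c⊗v_c⊗v_c, and ω_c = 1/λ_c² with λ_c = 1/√ω_c. -/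
theorem whitening_recovery
    {K d : ℕ}
    (w : Fin K → ℝ) (hw : ∀ c, 0 < w c)
    (u : Fin K → Fin d → ℝ) (hu : LinearIndependent ℝ u)
    (W : Matrix (Fin d) (Fin K) ℝ)
    (hW : Wᵀ * (∑ c, w c • Matrix.vecMulVec (u c) (u c)) * W = 1)
    (v : Fin K → EuclideanSpace ℝ (Fin K))
    (hv : ∀ c a, v c a = Real.sqrt (w c) * (Wᵀ.mulVec (u c)) a) :
    Orthonormal ℝ v ∧
      Submodule.span ℝ (Set.range v) = ⊤ ∧
      (∀ a b e : Fin K,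
        (∑ c, w c * (Wᵀ.mulVec (u c) a * (Wᵀ.mulVec (u c) b * Wᵀ.mulVec (u c) e)))
          = ∑ c, (1 / Real.sqrt (w c)) * (v c a * (v c b * v c e))) ∧
      (∀ c, w c = 1 / (1 / Real.sqrt (w c)) ^ 2) :=
  whitening_recovery_general w hw u W hW v hv
end
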